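/- For the quantum Tsallis entropy S_q(ρ) = (Tr(ρ^q) - 1)/(1-q) with q ∈ (1,∞) and density matrices ρ₁, ρ₂ with trace distance T = T(ρ₁,ρ₂), the continuity bound |S_q(ρ₁) - S_q(ρ₂)| ≤ (2q/(q-1))·T holds. -/

import Mathlib

open Matrix
open scoped ComplexOrder

/-- The trace norm `‖A‖₁ = Tr √(Aᴴ A)`. -/
noncomputable def traceNorm {n : Type*} [Fintype n] [DecidableEq n]
    (A : Matrix n n ℂ) : ℝ :=
  ((Matrix.posSemidef_conjTranspose_mul_self A).1.eigenvectorUnitary.1 *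
    diagonal (((↑) : ℝ → ℂ) ∘ (√·) ∘ (Matrix.posSemidef_conjTranspose_mul_self A).1.eigenvalues) *
    (star (Matrix.posSemidef_conjTranspose_mul_self A).1.eigenvectorUnitary :
      Matrix n n ℂ)).trace.re

/-- The trace distance `T(ρ,σ) = ‖ρ - σ‖₁ / 2`. -/
noncomputable def traceDist {n : Type*} [Fintype n] [DecidableEq n]
    (ρ σ : Matrix n n ℂ) : ℝ :=
  traceNorm (ρ - σ) / 2

/-- The quantum Tsallis entropy `S_q(ρ) = (Tr(ρ^q) - 1)/(1 - q)`, expressed via the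
eigenvalues of the Hermitian matrix `ρ`: `Tr(ρ^q) = ∑ λᵢ^q` (real power). -/
noncomputable def tsallisEntropy {d : ℕ} (q : ℝ)
    (ρ : Matrix (Fin d) (Fin d) ℂ) (hρ : ρ.IsHermitian) : ℝ :=
  ((∑ i, (hρ.eigenvalues i) ^ q) - 1) / (1 - q)


/-!
Let `P i j = |⟨uᵢ, vⱼ⟩|²` be the overlaps of the eigenbases `u` of `ρ` and `v` of `σ`; `P` is
doubly stochastic. Averaging the tangent-line bound `a ^ q - b ^ q ≤ q a ^ (q - 1) (a - b)` over
pairs of eigenvalues with weights `P` gives Klein's inequality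
`Tr ρ ^ q - Tr σ ^ q ≤ Tr (q ρ ^ (q - 1) (ρ - σ))`. As the eigenvalues of `ρ` lie in `[0, 1]`, the
eigenvalues of `q ρ ^ (q - 1)` lie in `[0, q]`, and the same weights bound the right-hand side by
`q ‖ρ - σ‖₁ = 2 q T(ρ, σ)`. Exchanging `ρ` and `σ` and dividing by `q - 1` gives the claim.
-/

section

variable {n : Type*} [Fintype n] [DecidableEq n]

lemma traceNorm_eq_re_trace_cfc_sqrt (A : Matrix n n ℂ) :
    traceNorm A = (cfc Real.sqrt (Aᴴ * A)).trace.re := by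
  rw [(posSemidef_conjTranspose_mul_self A).1.cfc_eq, IsHermitian.cfc,
    Unitary.conjStarAlgAut_apply]
  rfl

lemma traceNorm_neg (A : Matrix n n ℂ) : traceNorm (-A) = traceNorm A := by
  rw [traceNorm_eq_re_trace_cfc_sqrt, traceNorm_eq_re_trace_cfc_sqrt, conjTranspose_neg,
    neg_mul_neg]

end

namespace Matrix

section

variable {n : Type*} [Fintype n]

lemma trace_conj_mul_conj {R : Type*} [CommSemiring R] [StarRing R] (U V D E : Matrix n n R) :
    (U * D * star U * (V * E * star V)).trace =
      (D * (star U * V) * E * star (star U * V)).trace := by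
  simp only [StarMul.star_mul, star_star, mul_assoc]
  rw [trace_mul_comm U]
  simp only [mul_assoc]

variable [DecidableEq n]

lemma sum_sum_mul_sub_of_mem_doublyStochastic {M : Matrix n n ℝ} (hM : M ∈ doublyStochastic ℝ n)
    (x y : n → ℝ) :
    ∑ i, ∑ j, M i j * (x i - y j) = ∑ i, x i - ∑ j, y j := by
  simp only [mul_sub, Finset.sum_sub_distrib, ← Finset.sum_mul, sum_row_of_mem_doublyStochastic hM]
  rw [Finset.sum_comm]
  simp only [← Finset.sum_mul, sum_col_of_mem_doublyStochastic hM, one_mul]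

lemma map_normSq_mem_doublyStochastic {U : Matrix n n ℂ} (hU : U ∈ unitaryGroup n ℂ) :
    U.map Complex.normSq ∈ doublyStochastic ℝ n := by
  refine mem_doublyStochastic_iff_sum.2
    ⟨fun i j => Complex.normSq_nonneg _, fun i => ?_, fun j => ?_⟩
  · have := congrFun₂ (mem_unitaryGroup_iff.1 hU) i i
    simp only [mul_apply, star_apply, RCLike.star_def, Complex.mul_conj, one_apply_eq] at this
    exact_mod_cast this
  · have := congrFun₂ (mem_unitaryGroup_iff'.1 hU) j j
    simp only [mul_apply, star_apply, RCLike.star_def, mul_comm, Complex.mul_conj,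
      one_apply_eq] at this
    exact_mod_cast this

lemma re_trace_diagonal_mul_diagonal_mul_star (W : Matrix n n ℂ) (c v : n → ℝ) :
    (diagonal (Complex.ofReal ∘ c) * W * diagonal (Complex.ofReal ∘ v) * star W).trace.re =
      ∑ i, ∑ j, c i * v j * Complex.normSq (W i j) := by
  have hentry : diagonal (Complex.ofReal ∘ c) * W * diagonal (Complex.ofReal ∘ v) =
      of fun i j => c i * W i j * v j := by
    ext i j
    simp [mul_diagonal, diagonal_mul]
  simp only [hentry, trace, diag, mul_apply, of_apply, star_apply, Complex.re_sum]
  refine Finset.sum_congr rfl fun i _ => Finset.sum_congr rfl fun j _ => ?_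
  rw [show (c i : ℂ) * W i j * v j * star (W i j) = ((c i * v j * Complex.normSq (W i j) : ℝ) : ℂ)
    by rw [RCLike.star_def]; push_cast [← Complex.mul_conj]; ring, Complex.ofReal_re]

lemma PosSemidef.eigenvalues_le_re_trace {A : Matrix n n ℂ} (hA : A.PosSemidef) (i : n) :
    hA.1.eigenvalues i ≤ A.trace.re := by
  rw [hA.1.trace_eq_sum_eigenvalues, Complex.re_sum]
  simp only [← RCLike.re_to_complex, RCLike.ofReal_re]
  exact Finset.single_le_sum (fun j _ => hA.eigenvalues_nonneg j) (Finset.mem_univ i)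

namespace IsHermitian

variable {A B : Matrix n n ℂ}

lemma trace_cfc (hA : A.IsHermitian) (f : ℝ → ℝ) :
    (cfc f A).trace = ∑ i, (f (hA.eigenvalues i) : ℂ) := by
  rw [cfc_eq hA, IsHermitian.cfc, Unitary.conjStarAlgAut_apply, trace_mul_cycle,
    Unitary.coe_star_mul_self, one_mul, trace_diagonal]
  rfl

lemma traceNorm_eq_sum_abs_eigenvalues (hA : A.IsHermitian) :
    traceNorm A = ∑ i, |hA.eigenvalues i| := by
  have hsq : Aᴴ * A = cfc (· ^ 2 : ℝ → ℝ) A := by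
    rw [hA.eq, cfc_pow_id A 2 hA.isSelfAdjoint, sq]
  rw [traceNorm_eq_re_trace_cfc_sqrt, hsq, ← cfc_comp Real.sqrt (· ^ 2) A hA.isSelfAdjoint,
    hA.trace_cfc, Complex.re_sum]
  simp only [Function.comp_apply, Complex.ofReal_re, Real.sqrt_sq_eq_abs]

/-- `eigenOverlap hA hB i j = |⟨uᵢ, vⱼ⟩|²` for the eigenbases `u` of `A` and `v` of `B`. -/
noncomputable def eigenOverlap (hA : A.IsHermitian) (hB : B.IsHermitian) : Matrix n n ℝ :=
  ((star hA.eigenvectorUnitary * hB.eigenvectorUnitary : unitaryGroup n ℂ) : Matrix n n ℂ).map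
    Complex.normSq

lemma eigenOverlap_mem_doublyStochastic (hA : A.IsHermitian) (hB : B.IsHermitian) :
    hA.eigenOverlap hB ∈ doublyStochastic ℝ n :=
  map_normSq_mem_doublyStochastic (star hA.eigenvectorUnitary * hB.eigenvectorUnitary).2

lemma eigenOverlap_self (hA : A.IsHermitian) : hA.eigenOverlap hA = 1 := by
  ext i j
  simp [eigenOverlap, one_apply]

lemma re_trace_cfc_mul (hA : A.IsHermitian) (hB : B.IsHermitian) (f : ℝ → ℝ) :
    (cfc f A * B).trace.re =
      ∑ i, ∑ j, f (hA.eigenvalues i) * hB.eigenvalues j * hA.eigenOverlap hB i j := by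
  rw [cfc_eq hA, IsHermitian.cfc, Unitary.conjStarAlgAut_apply]
  conv_lhs => rw [hB.spectral_theorem, Unitary.conjStarAlgAut_apply, trace_conj_mul_conj]
  exact re_trace_diagonal_mul_diagonal_mul_star _ _ _

/-- **Klein's inequality**. -/
theorem sum_sub_sum_le_re_trace_cfc_mul_sub (hA : A.IsHermitian) (hB : B.IsHermitian)
    {f g : ℝ → ℝ} (hfg : ∀ i j, f (hA.eigenvalues i) - f (hB.eigenvalues j) ≤
      g (hA.eigenvalues i) * (hA.eigenvalues i - hB.eigenvalues j)) :
    ∑ i, f (hA.eigenvalues i) - ∑ j, f (hB.eigenvalues j) ≤ (cfc g A * (A - B)).trace.re := by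
  have hP := hA.eigenOverlap_mem_doublyStochastic hB
  set P := hA.eigenOverlap hB
  have hAA : (cfc g A * A).trace.re = ∑ i, g (hA.eigenvalues i) * hA.eigenvalues i := by
    simp [hA.re_trace_cfc_mul hA, eigenOverlap_self, one_apply]
  calc ∑ i, f (hA.eigenvalues i) - ∑ j, f (hB.eigenvalues j)
      = ∑ i, ∑ j, P i j * (f (hA.eigenvalues i) - f (hB.eigenvalues j)) :=
        (sum_sum_mul_sub_of_mem_doublyStochastic hP _ _).symm
    _ ≤ ∑ i, ∑ j, P i j * (g (hA.eigenvalues i) * (hA.eigenvalues i - hB.eigenvalues j)) :=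
        Finset.sum_le_sum fun i _ => Finset.sum_le_sum fun j _ =>
          mul_le_mul_of_nonneg_left (hfg i j) (nonneg_of_mem_doublyStochastic hP)
    _ = (cfc g A * A).trace.re - (cfc g A * B).trace.re := by
        rw [hAA, hA.re_trace_cfc_mul hB, ← Finset.sum_sub_distrib]
        refine Finset.sum_congr rfl fun i _ => ?_
        rw [← mul_one (_ * _), ← sum_row_of_mem_doublyStochastic hP i, Finset.mul_sum,
          ← Finset.sum_sub_distrib]
        exact Finset.sum_congr rfl fun j _ => by ring
    _ = (cfc g A * (A - B)).trace.re := by rw [mul_sub, trace_sub, Complex.sub_re]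

lemma re_trace_cfc_mul_le (hA : A.IsHermitian) (hB : B.IsHermitian) {g : ℝ → ℝ} {K : ℝ}
    (hg : ∀ i, |g (hA.eigenvalues i)| ≤ K) :
    (cfc g A * B).trace.re ≤ K * ∑ j, |hB.eigenvalues j| := by
  have hP := hA.eigenOverlap_mem_doublyStochastic hB
  rw [hA.re_trace_cfc_mul hB]
  calc ∑ i, ∑ j, g (hA.eigenvalues i) * hB.eigenvalues j * hA.eigenOverlap hB i j
      ≤ ∑ i, ∑ j, K * |hB.eigenvalues j| * hA.eigenOverlap hB i j := by
        refine Finset.sum_le_sum fun i _ => Finset.sum_le_sum fun j _ =>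
          mul_le_mul_of_nonneg_right ?_ (nonneg_of_mem_doublyStochastic hP)
        calc g (hA.eigenvalues i) * hB.eigenvalues j
            ≤ |g (hA.eigenvalues i)| * |hB.eigenvalues j| := (le_abs_self _).trans (abs_mul _ _).le
          _ ≤ K * |hB.eigenvalues j| := mul_le_mul_of_nonneg_right (hg i) (abs_nonneg _)
    _ = K * ∑ j, |hB.eigenvalues j| := by
        rw [Finset.sum_comm, Finset.mul_sum]
        simp only [← Finset.mul_sum, sum_col_of_mem_doublyStochastic hP, mul_one]

end IsHermitian

end

end Matrix

lemma Real.rpow_sub_rpow_le_mul_sub {q a b : ℝ} (hq : 1 ≤ q) (ha : 0 ≤ a) (hb : 0 ≤ b) :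
    a ^ q - b ^ q ≤ q * a ^ (q - 1) * (a - b) := by
  rcases ha.eq_or_lt with rfl | ha
  · rcases hq.eq_or_lt with rfl | hq
    · simp
    rw [Real.zero_rpow (by linarith), Real.zero_rpow (by linarith)]
    simp only [mul_zero, zero_mul, zero_sub]
    exact neg_nonpos.2 (by positivity)
  have hab : 0 ≤ b / a := div_nonneg hb ha.le
  have hbernoulli := one_add_mul_self_le_rpow_one_add (by linarith : -1 ≤ b / a - 1) hq
  rw [add_sub_cancel, ← mul_le_mul_iff_left₀ (Real.rpow_pos_of_pos ha q),
    ← Real.mul_rpow hab ha.le, div_mul_cancel₀ _ ha.ne'] at hbernoulli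
  have hpow : a ^ q = a ^ (q - 1) * a := by rw [← Real.rpow_add_one ha.ne', sub_add_cancel]
  rw [hpow] at hbernoulli ⊢
  field_simp at hbernoulli
  linarith

section

variable {n : Type*} [Fintype n] [DecidableEq n]

theorem sum_rpow_eigenvalues_sub_le {q : ℝ} (hq : 1 ≤ q) {ρ σ : Matrix n n ℂ}
    (hρ : ρ.PosSemidef) (hσ : σ.PosSemidef) (hρ_le : ∀ i, hρ.1.eigenvalues i ≤ 1) :
    ∑ i, hρ.1.eigenvalues i ^ q - ∑ j, hσ.1.eigenvalues j ^ q ≤ q * traceNorm (ρ - σ) := by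
  have hΔ := hρ.1.sub hσ.1
  calc ∑ i, hρ.1.eigenvalues i ^ q - ∑ j, hσ.1.eigenvalues j ^ q
      ≤ (cfc (fun x => q * x ^ (q - 1)) ρ * (ρ - σ)).trace.re :=
        hρ.1.sum_sub_sum_le_re_trace_cfc_mul_sub hσ.1 (f := (· ^ q)) fun i j =>
          Real.rpow_sub_rpow_le_mul_sub hq (hρ.eigenvalues_nonneg i) (hσ.eigenvalues_nonneg j)
    _ ≤ q * ∑ j, |hΔ.eigenvalues j| := by
        refine hρ.1.re_trace_cfc_mul_le hΔ fun i => ?_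
        have h0 := hρ.eigenvalues_nonneg i
        rw [abs_of_nonneg (by positivity)]
        exact mul_le_of_le_one_right (by linarith) (Real.rpow_le_one h0 (hρ_le i) (by linarith))
    _ = q * traceNorm (ρ - σ) := by rw [hΔ.traceNorm_eq_sum_abs_eigenvalues]

theorem abs_sum_rpow_eigenvalues_sub_le {q : ℝ} (hq : 1 ≤ q) {ρ σ : Matrix n n ℂ}
    (hρ : ρ.PosSemidef) (hσ : σ.PosSemidef) (hρ_le : ∀ i, hρ.1.eigenvalues i ≤ 1)
    (hσ_le : ∀ i, hσ.1.eigenvalues i ≤ 1) :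
    |∑ i, hρ.1.eigenvalues i ^ q - ∑ j, hσ.1.eigenvalues j ^ q| ≤ q * traceNorm (ρ - σ) := by
  refine abs_le.2 ⟨?_, sum_rpow_eigenvalues_sub_le hq hρ hσ hρ_le⟩
  have := sum_rpow_eigenvalues_sub_le hq hσ hρ hσ_le
  rw [← neg_sub ρ σ, traceNorm_neg] at this
  linarith

end

lemma tsallisEntropy_sub_tsallisEntropy {d : ℕ} (q : ℝ) {ρ σ : Matrix (Fin d) (Fin d) ℂ}
    (hρ : ρ.IsHermitian) (hσ : σ.IsHermitian) :
    tsallisEntropy q ρ hρ - tsallisEntropy q σ hσ =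
      -(∑ i, hρ.eigenvalues i ^ q - ∑ j, hσ.eigenvalues j ^ q) / (q - 1) := by
  rw [tsallisEntropy, tsallisEntropy, div_sub_div_same, ← neg_div_neg_eq, neg_sub]
  ring

theorem tsallis_continuity_bound {d : ℕ} (q : ℝ) (hq : 1 < q)
    (ρ₁ ρ₂ : Matrix (Fin d) (Fin d) ℂ)
    (hρ₁ : ρ₁.PosSemidef) (h₁ : ρ₁.trace = 1)
    (hρ₂ : ρ₂.PosSemidef) (h₂ : ρ₂.trace = 1) :
    |tsallisEntropy q ρ₁ hρ₁.1 - tsallisEntropy q ρ₂ hρ₂.1| ≤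
      (2 * q / (q - 1)) * traceDist ρ₁ ρ₂ := by
  have hq1 : 0 < q - 1 := sub_pos.2 hq
  have hbound := abs_sum_rpow_eigenvalues_sub_le hq.le hρ₁ hρ₂
    (fun i => by simpa [h₁] using hρ₁.eigenvalues_le_re_trace i)
    (fun i => by simpa [h₂] using hρ₂.eigenvalues_le_re_trace i)
  rw [tsallisEntropy_sub_tsallisEntropy, abs_div, abs_neg, abs_of_pos hq1, traceDist]
  calc _ ≤ q * traceNorm (ρ₁ - ρ₂) / (q - 1) := div_le_div_of_nonneg_right hbound hq1.le
    _ = _ := by field_simp
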